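/- Let μ be a finite non-atomic vector-valued measure (with values in ℝ^d) on a measurable space, with μ(∅) = 0 and total measure μ(U). Then for every β ∈ [0,1] there exists a measurable set V_β with μ(V_β) = β·μ(U). Moreover, the complement V_β^c satisfies μ(V_β^c) = (1−β)·μ(U). -/

import Mathlib

/-
Let `ν` be the variation of `μ`: a finite measure, non-atomic because `μ` is, and dominating every
coordinate of `μ`. Sierpiński's greedy exhaustion shows that `ν` takes every value in `[0, ν A]` on
subsets of `A`; in particular every measurable set can be halved for `ν`.

The coordinates are then added one at a time. If every measurable set can be halved simultaneously
for a finite family `S` of signed measures, iterated halving and a dyadic limit give a monotone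
sweep `t ↦ D t` of `A` with `s (D t) = t * s A` for all `s ∈ S`. Such sweeps allow halving for one
more signed measure `h` dominated by `ν`: with sweeps `F` of a half `B` of `A` and `G` of
`C = A \ B`, the sets `F t ∪ (C \ G t)` keep every `s ∈ S` at `s A / 2`, while
`h (F t ∪ (C \ G t))` moves continuously from `h C` to `h B` and so passes `h A / 2`.
-/

open MeasureTheory Set Filter Topology

namespace MeasureTheory

section NonAtomic

variable {X : Type*} [MeasurableSpace X]

/-- Stated for set functions, so that it applies to measures and vector measures alike. -/
def IsNonAtomic {M : Type*} [Zero M] (m : Set X → M) : Prop :=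
  ∀ A, MeasurableSet A → m A ≠ 0 → ∃ B ⊆ A, MeasurableSet B ∧ m B ≠ 0 ∧ m B ≠ m A

theorem exists_half_maximal_subset_measureReal_le (ν : Measure X) (U : Set X) {r : ℝ}
    (hr : 0 ≤ r) :
    ∃ E ⊆ U, MeasurableSet E ∧ ν.real E ≤ r ∧
      ∀ F ⊆ U, MeasurableSet F → ν.real F ≤ r → ν.real F ≤ 2 * ν.real E := by
  set 𝓕 : Set (Set X) := {F | F ⊆ U ∧ MeasurableSet F ∧ ν.real F ≤ r}
  have hbdd : BddAbove (ν.real '' 𝓕) := ⟨r, by rintro _ ⟨F, ⟨-, -, hF⟩, rfl⟩; exact hF⟩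
  have hle : ∀ F ∈ 𝓕, ν.real F ≤ sSup (ν.real '' 𝓕) :=
    fun F hF ↦ le_csSup hbdd ⟨F, hF, rfl⟩
  have hempty : ∅ ∈ 𝓕 := ⟨empty_subset U, .empty, by simpa using hr⟩
  rcases le_or_gt (sSup (ν.real '' 𝓕)) 0 with hsup | hsup
  · refine ⟨∅, empty_subset U, .empty, by simpa using hr, fun F hFU hF hFr ↦ ?_⟩
    simpa using (hle F ⟨hFU, hF, hFr⟩).trans hsup
  · obtain ⟨_, ⟨E, ⟨hEU, hE, hEr⟩, rfl⟩, hlt⟩ :=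
      exists_lt_of_lt_csSup ⟨_, mem_image_of_mem _ hempty⟩ (half_lt_self hsup)
    exact ⟨E, hEU, hE, hEr, fun F hFU hF hFr ↦ by linarith [hle F ⟨hFU, hF, hFr⟩]⟩

variable {ν : Measure X} [IsFiniteMeasure ν] {A : Set X}

namespace IsNonAtomic

theorem exists_subset_measureReal_pos_le_half (hν : IsNonAtomic ν) (hA : MeasurableSet A)
    (hA0 : 0 < ν.real A) :
    ∃ B ⊆ A, MeasurableSet B ∧ 0 < ν.real B ∧ ν.real B ≤ ν.real A / 2 := by
  obtain ⟨B, hBA, hB, hB0, hBA'⟩ :=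
    hν A hA ((measureReal_ne_zero_iff (measure_ne_top ν A)).1 hA0.ne')
  have hB0 : 0 < ν.real B :=
    measureReal_nonneg.lt_of_ne' ((measureReal_ne_zero_iff (measure_ne_top ν B)).2 hB0)
  have hlt : ν.real B < ν.real A := (measureReal_mono hBA).lt_of_ne
    (mt (measureReal_eq_measureReal_iff (measure_ne_top ν B) (measure_ne_top ν A)).1 hBA')
  rcases le_total (ν.real B) (ν.real A / 2) with hhalf | hhalf
  · exact ⟨B, hBA, hB, hB0, hhalf⟩
  · refine ⟨A \ B, sdiff_subset, hA.diff hB, ?_, ?_⟩ <;>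
      rw [measureReal_sdiff hBA hB] <;> linarith

theorem exists_subset_measureReal_pos_lt (hν : IsNonAtomic ν) (hA : MeasurableSet A)
    (hA0 : 0 < ν.real A) {ε : ℝ} (hε : 0 < ε) :
    ∃ B ⊆ A, MeasurableSet B ∧ 0 < ν.real B ∧ ν.real B < ε := by
  have halving (n : ℕ) :
      ∃ B ⊆ A, MeasurableSet B ∧ 0 < ν.real B ∧ ν.real B ≤ ν.real A * (1 / 2) ^ n := by
    induction n with
    | zero => exact ⟨A, subset_rfl, hA, hA0, by simp⟩
    | succ n ih =>
      obtain ⟨B, hBA, hB, hB0, hBle⟩ := ih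
      obtain ⟨C, hCB, hC, hC0, hCle⟩ := hν.exists_subset_measureReal_pos_le_half hB hB0
      exact ⟨C, hCB.trans hBA, hC, hC0, by rw [pow_succ]; linarith⟩
  obtain ⟨n, hn⟩ := exists_pow_lt_of_lt_one (div_pos hε hA0) (by norm_num : (1 / 2 : ℝ) < 1)
  obtain ⟨B, hBA, hB, hB0, hBle⟩ := halving n
  exact ⟨B, hBA, hB, hB0, hBle.trans_lt (by rwa [lt_div_iff₀' hA0] at hn)⟩

end IsNonAtomic

theorem exists_greedy_chain (A : Set X) {c : ℝ} (hc : 0 ≤ c) :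
    ∃ T : ℕ → Set X, Monotone T ∧ (∀ n, MeasurableSet (T n) ∧ T n ⊆ A ∧ ν.real (T n) ≤ c) ∧
      ∀ n, ∀ F ⊆ A \ T n, MeasurableSet F → ν.real (T n) + ν.real F ≤ c →
        ν.real F ≤ 2 * (ν.real (T (n + 1)) - ν.real (T n)) := by
  choose! E hEsub hE hEle hEmax using fun T (hT : ν.real T ≤ c) ↦
    exists_half_maximal_subset_measureReal_le ν (A \ T) (sub_nonneg.2 hT)
  let T : ℕ → Set X := fun n ↦ Nat.rec ∅ (fun _ T ↦ T ∪ E T) n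
  have hT_measureReal (n : ℕ) (hn : ν.real (T n) ≤ c) :
      ν.real (T (n + 1)) = ν.real (T n) + ν.real (E (T n)) :=
    measureReal_union (disjoint_sdiff_right.mono_right (hEsub _ hn)) (hE _ hn)
  have hT (n : ℕ) : MeasurableSet (T n) ∧ T n ⊆ A ∧ ν.real (T n) ≤ c := by
    induction n with
    | zero => simpa [T] using hc
    | succ n ih =>
      obtain ⟨hTn, hTA, hTc⟩ := ih
      refine ⟨hTn.union (hE _ hTc), union_subset hTA ((hEsub _ hTc).trans sdiff_subset), ?_⟩
      rw [hT_measureReal n hTc]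
      linarith [hEle _ hTc]
  refine ⟨T, monotone_nat_of_le_succ fun n ↦ subset_union_left, hT,
    fun n F hF hFm hFc ↦ ?_⟩
  rw [hT_measureReal n (hT n).2.2, add_sub_cancel_left]
  exact hEmax _ (hT n).2.2 F hF hFm (by linarith)

theorem IsNonAtomic.exists_subset_measureReal_eq (hν : IsNonAtomic ν) (hA : MeasurableSet A)
    {c : ℝ} (hc : 0 ≤ c) (hcA : c ≤ ν.real A) : ∃ B ⊆ A, MeasurableSet B ∧ ν.real B = c := by
  obtain ⟨T, hTmono, hT, hTmax⟩ := exists_greedy_chain (ν := ν) A hc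
  have hU : MeasurableSet (⋃ n, T n) := .iUnion fun n ↦ (hT n).1
  have hUle : ν.real (⋃ n, T n) ≤ c := by
    refine ENNReal.toReal_le_of_le_ofReal hc ?_
    rw [hTmono.measure_iUnion]
    exact iSup_le fun n ↦ (ENNReal.le_ofReal_iff_toReal_le (measure_ne_top ν _) hc).2 (hT n).2.2
  refine ⟨⋃ n, T n, iUnion_subset fun n ↦ (hT n).2.1, hU, hUle.antisymm (not_lt.1 fun hlt ↦ ?_)⟩
  -- a set of positive mass below the gap `c - ν (⋃ T)` is a candidate at every step,
  -- so the chain would grow without bound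
  obtain ⟨F, hFA, hF, hF0, hFc⟩ := hν.exists_subset_measureReal_pos_lt (hA.diff hU)
    (by rw [measureReal_sdiff (iUnion_subset fun n ↦ (hT n).2.1) hU]; linarith)
    (sub_pos.2 hlt)
  have hgrowth (n : ℕ) : n * (ν.real F / 2) ≤ ν.real (T n) := by
    induction n with
    | zero => simp
    | succ n ih =>
      have hTU : ν.real (T n) ≤ ν.real (⋃ n, T n) := measureReal_mono (subset_iUnion T n)
      have := hTmax n F (hFA.trans (sdiff_subset_sdiff_right (subset_iUnion T n))) hF
        (by linarith)
      push_cast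
      linarith
  obtain ⟨n, hn⟩ := exists_nat_gt (c / (ν.real F / 2))
  rw [div_lt_iff₀ (by positivity)] at hn
  linarith [hgrowth n, (hT n).2.2]

end NonAtomic

namespace SignedMeasure

section Sweep

variable {X : Type*} [MeasurableSpace X]

structure IsSweep (S : Set (SignedMeasure X)) (A : Set X) (D : ℝ → Set X) : Prop where
  monotone : Monotone D
  measurableSet : ∀ t, MeasurableSet (D t)
  zero : D 0 = ∅
  one : D 1 = A
  apply_eq : ∀ s ∈ S, ∀ t ∈ Icc (0 : ℝ) 1, s (D t) = t * s A

def CanSweep (S : Set (SignedMeasure X)) : Prop :=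
  ∀ A, MeasurableSet A → ∃ D, IsSweep S A D

def CanHalve (S : Set (SignedMeasure X)) : Prop :=
  ∀ A, MeasurableSet A → ∃ B ⊆ A, MeasurableSet B ∧ ∀ s ∈ S, s B = s A / 2

structure IsHalving (S : Set (SignedMeasure X)) (H : Set X → Set X) : Prop where
  subset : ∀ E, MeasurableSet E → H E ⊆ E
  measurableSet : ∀ E, MeasurableSet E → MeasurableSet (H E)
  apply_eq : ∀ E, MeasurableSet E → ∀ s ∈ S, s (H E) = s E / 2

variable {S : Set (SignedMeasure X)}

theorem CanHalve.exists_isHalving (hS : CanHalve S) : ∃ H, IsHalving S H := by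
  choose! H hsub hmeas happly using hS
  exact ⟨H, hsub, hmeas, happly⟩

namespace IsHalving

variable {H : Set X → Set X} {E F : Set X}

theorem union_sdiff_subset (hH : IsHalving S H) (hE : MeasurableSet E) (hF : MeasurableSet F)
    (hEF : E ⊆ F) : E ∪ H (F \ E) ⊆ F :=
  union_subset hEF ((hH.subset _ (hF.diff hE)).trans sdiff_subset)

theorem apply_union_sdiff (hH : IsHalving S H) {s : SignedMeasure X} (hs : s ∈ S)
    (hE : MeasurableSet E) (hF : MeasurableSet F) (hEF : E ⊆ F) :
    s (E ∪ H (F \ E)) = (s E + s F) / 2 := by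
  rw [VectorMeasure.of_union (disjoint_sdiff_right.mono_right (hH.subset _ (hF.diff hE))) hE
    (hH.measurableSet _ (hF.diff hE)), hH.apply_eq _ (hF.diff hE) s hs,
    VectorMeasure.of_sdiff hE hF hEF]
  ring

end IsHalving

end Sweep

section DyadicChain

variable {X : Type*} (H : Set X → Set X) (A : Set X)

def bisect (Q : ℕ → Set X) (j : ℕ) : Set X :=
  if Even j then Q (j / 2) else Q (j / 2) ∪ H (Q (j / 2 + 1) \ Q (j / 2))

-- Level `k` is a chain from `∅` (index `0`) to `A` (index `2 ^ k`) whose consecutive steps carry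
-- a `2⁻ᵏ`-fraction of every measure that `H` halves.
def dyadicChain : ℕ → ℕ → Set X
  | 0 => fun j ↦ if j = 0 then ∅ else A
  | k + 1 => bisect H (dyadicChain k)

def dyadicSweep (t : ℝ) : Set X :=
  ⋃ k, dyadicChain H A k ⌊t * 2 ^ k⌋₊

variable {H} {Q : ℕ → Set X}

@[simp]
theorem bisect_two_mul (j : ℕ) : bisect H Q (2 * j) = Q j := by
  simp [bisect]

theorem bisect_two_mul_add_one (j : ℕ) :
    bisect H Q (2 * j + 1) = Q j ∪ H (Q (j + 1) \ Q j) := by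
  have : (2 * j + 1) / 2 = j := by omega
  simp [bisect, this]

variable (H)

@[simp]
theorem dyadicChain_zero_right (k : ℕ) : dyadicChain H A k 0 = ∅ := by
  induction k with
  | zero => simp [dyadicChain]
  | succ k ih => rw [dyadicChain, ← mul_zero 2, bisect_two_mul, ih]

theorem dyadicChain_two_pow (k : ℕ) : dyadicChain H A k (2 ^ k) = A := by
  induction k with
  | zero => simp [dyadicChain]
  | succ k ih => rw [dyadicChain, pow_succ', bisect_two_mul, ih]

variable [MeasurableSpace X] {S : Set (SignedMeasure X)} {H A}

theorem measurableSet_bisect (hH : IsHalving S H) (hQ : ∀ j, MeasurableSet (Q j)) (j : ℕ) :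
    MeasurableSet (bisect H Q j) := by
  obtain ⟨m, rfl | rfl⟩ := Nat.even_or_odd' j
  · simpa using hQ m
  · rw [bisect_two_mul_add_one]
    exact (hQ m).union (hH.measurableSet _ ((hQ _).diff (hQ m)))

theorem monotone_bisect (hH : IsHalving S H) (hQ : ∀ j, MeasurableSet (Q j))
    (hQmono : Monotone Q) : Monotone (bisect H Q) := by
  refine monotone_nat_of_le_succ fun j ↦ ?_
  obtain ⟨m, rfl | rfl⟩ := Nat.even_or_odd' j
  · rw [bisect_two_mul, bisect_two_mul_add_one]
    exact subset_union_left
  · rw [bisect_two_mul_add_one, show 2 * m + 1 + 1 = 2 * (m + 1) by ring, bisect_two_mul]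
    exact hH.union_sdiff_subset (hQ m) (hQ _) (hQmono m.le_succ)

theorem apply_bisect (hH : IsHalving S H) (hQ : ∀ j, MeasurableSet (Q j))
    (hQmono : Monotone Q) {s : SignedMeasure X} (hs : s ∈ S) {N : ℕ} {c : ℝ}
    (hQs : ∀ j ≤ N, s (Q j) = j / N * c) {j : ℕ} (hj : j ≤ 2 * N) :
    s (bisect H Q j) = j / (2 * N : ℕ) * c := by
  obtain ⟨m, rfl | rfl⟩ := Nat.even_or_odd' j
  · rw [bisect_two_mul, hQs m (by omega)]
    push_cast
    rw [mul_div_mul_left _ _ two_ne_zero]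
  · have hN : (N : ℝ) ≠ 0 := by norm_cast; omega
    rw [bisect_two_mul_add_one, hH.apply_union_sdiff hs (hQ m) (hQ _) (hQmono m.le_succ),
      hQs m (by omega), hQs (m + 1) (by omega)]
    push_cast
    field_simp
    ring

theorem measurableSet_dyadicChain (hH : IsHalving S H) (hA : MeasurableSet A) (k j : ℕ) :
    MeasurableSet (dyadicChain H A k j) := by
  induction k generalizing j with
  | zero => by_cases hj : j = 0 <;> simp [dyadicChain, hj, hA]
  | succ k ih => exact measurableSet_bisect hH ih j

theorem monotone_dyadicChain (hH : IsHalving S H) (hA : MeasurableSet A) (k : ℕ) :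
    Monotone (dyadicChain H A k) := by
  induction k with
  | zero =>
    refine monotone_nat_of_le_succ fun j ↦ ?_
    by_cases hj : j = 0 <;> simp [dyadicChain, hj]
  | succ k ih => exact monotone_bisect hH (measurableSet_dyadicChain hH hA k) ih

theorem apply_dyadicChain (hH : IsHalving S H) (hA : MeasurableSet A) {s : SignedMeasure X}
    (hs : s ∈ S) (k : ℕ) {j : ℕ} (hj : j ≤ 2 ^ k) :
    s (dyadicChain H A k j) = j / (2 ^ k : ℕ) * s A := by
  induction k generalizing j with
  | zero =>
    interval_cases j <;> simp [dyadicChain]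
  | succ k ih =>
    rw [pow_succ'] at hj ⊢
    exact apply_bisect hH (measurableSet_dyadicChain hH hA k) (monotone_dyadicChain hH hA k) hs
      (fun j hj ↦ ih hj) hj

theorem monotone_dyadicChain_floor (hH : IsHalving S H) (hA : MeasurableSet A) {t : ℝ}
    (ht : 0 ≤ t) : Monotone fun k ↦ dyadicChain H A k ⌊t * 2 ^ k⌋₊ := by
  refine monotone_nat_of_le_succ fun k ↦ ?_
  have hfloor : 2 * ⌊t * 2 ^ k⌋₊ ≤ ⌊t * 2 ^ (k + 1)⌋₊ := by
    refine Nat.le_floor ?_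
    push_cast
    rw [pow_succ, ← mul_assoc, mul_comm _ (2 : ℝ)]
    exact mul_le_mul_of_nonneg_left (Nat.floor_le (by positivity)) zero_le_two
  calc dyadicChain H A k ⌊t * 2 ^ k⌋₊ = dyadicChain H A (k + 1) (2 * ⌊t * 2 ^ k⌋₊) :=
        (bisect_two_mul _).symm
    _ ⊆ dyadicChain H A (k + 1) ⌊t * 2 ^ (k + 1)⌋₊ := monotone_dyadicChain hH hA _ hfloor

theorem apply_dyadicSweep (hH : IsHalving S H) (hA : MeasurableSet A) {s : SignedMeasure X}
    (hs : s ∈ S) {t : ℝ} (ht : t ∈ Icc (0 : ℝ) 1) : s (dyadicSweep H A t) = t * s A := by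
  have hlim : Tendsto (fun k : ℕ ↦ s (dyadicChain H A k ⌊t * 2 ^ k⌋₊)) atTop
      (𝓝 (s (dyadicSweep H A t))) :=
    VectorMeasure.tendsto_vectorMeasure_iUnion_atTop_nat
      (monotone_dyadicChain_floor hH hA ht.1) fun k ↦ measurableSet_dyadicChain hH hA k _
  have hvalue (k : ℕ) : s (dyadicChain H A k ⌊t * 2 ^ k⌋₊) = ⌊t * 2 ^ k⌋₊ / 2 ^ k * s A := by
    rw [apply_dyadicChain hH hA hs k (Nat.floor_le_of_le ?_)]
    · push_cast; rfl
    · push_cast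
      exact mul_le_of_le_one_left (by positivity) ht.2
  have hratio : Tendsto (fun k : ℕ ↦ (⌊t * 2 ^ k⌋₊ / 2 ^ k : ℝ)) atTop (𝓝 t) :=
    (tendsto_nat_floor_mul_div_atTop ht.1).comp
      (tendsto_pow_atTop_atTop_of_one_lt one_lt_two)
  simp_rw [hvalue] at hlim
  exact tendsto_nhds_unique hlim (hratio.mul_const _)

theorem isSweep_dyadicSweep (hH : IsHalving S H) (hA : MeasurableSet A) :
    IsSweep S A (dyadicSweep H A) where
  monotone t u htu := iUnion_mono fun k ↦ monotone_dyadicChain hH hA k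
    (Nat.floor_mono (mul_le_mul_of_nonneg_right htu (by positivity)))
  measurableSet t := .iUnion fun k ↦ measurableSet_dyadicChain hH hA k _
  zero := by simp [dyadicSweep]
  one := by
    have (k : ℕ) : ⌊(2 : ℝ) ^ k⌋₊ = 2 ^ k := by
      rw [← Nat.cast_ofNat, ← Nat.cast_pow, Nat.floor_natCast]
    simp only [dyadicSweep, one_mul, this, dyadicChain_two_pow, iUnion_const]
  apply_eq s hs t ht := apply_dyadicSweep hH hA hs ht

theorem CanHalve.canSweep (hS : CanHalve S) : CanSweep S := by
  obtain ⟨H, hH⟩ := hS.exists_isHalving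
  exact fun A hA ↦ ⟨_, isSweep_dyadicSweep hH hA⟩

end DyadicChain

section Dominated

variable {X : Type*} [MeasurableSpace X] {ν : Measure X} [IsFiniteMeasure ν]
  {S : Set (SignedMeasure X)} {A : Set X} {D : ℝ → Set X} {h : SignedMeasure X}

def DominatedBy (s : SignedMeasure X) (ν : Measure X) : Prop :=
  ∀ E, |s E| ≤ ν.real E

namespace IsSweep

theorem subset (hD : IsSweep S A D) {t : ℝ} (ht : t ≤ 1) : D t ⊆ A :=
  hD.one ▸ hD.monotone ht

theorem abs_apply_sub_le (hD : IsSweep S A D) (hν : ν.toSignedMeasure ∈ S)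
    (hh : h.DominatedBy ν) {t u : ℝ} (ht : 0 ≤ t) (htu : t ≤ u) (hu : u ≤ 1) :
    |h (D u) - h (D t)| ≤ (u - t) * ν.real A := by
  have hsub := hD.monotone htu
  have hdiff := hD.measurableSet u |>.diff (hD.measurableSet t)
  rw [← VectorMeasure.of_sdiff (hD.measurableSet t) (hD.measurableSet u) hsub]
  calc |h (D u \ D t)| ≤ ν.real (D u \ D t) := hh _
    _ = ν.toSignedMeasure (D u) - ν.toSignedMeasure (D t) := by
      rw [← Measure.toSignedMeasure_apply_measurable hdiff,
        VectorMeasure.of_sdiff (hD.measurableSet t) (hD.measurableSet u) hsub]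
    _ = (u - t) * ν.real A := by
      rw [hD.apply_eq _ hν u ⟨ht.trans htu, hu⟩, hD.apply_eq _ hν t ⟨ht, htu.trans hu⟩,
        Measure.toSignedMeasure_apply_measurable (hD.one ▸ hD.measurableSet 1)]
      ring

theorem continuousOn_apply (hD : IsSweep S A D) (hν : ν.toSignedMeasure ∈ S)
    (hh : h.DominatedBy ν) : ContinuousOn (fun t ↦ h (D t)) (Icc 0 1) := by
  refine (LipschitzOnWith.of_dist_le_mul (K := (ν.real A).toNNReal) fun t ht u hu ↦ ?_).continuousOn
  rw [Real.coe_toNNReal _ measureReal_nonneg, Real.dist_eq, Real.dist_eq]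
  rcases le_total t u with htu | hut
  · rw [abs_sub_comm, abs_sub_comm t, abs_of_nonneg (sub_nonneg.2 htu), mul_comm]
    exact hD.abs_apply_sub_le hν hh ht.1 htu hu.2
  · rw [abs_of_nonneg (sub_nonneg.2 hut), mul_comm]
    exact hD.abs_apply_sub_le hν hh hu.1 hut ht.2

end IsSweep

theorem IsSweep.apply_union_sdiff {B C : Set X} {F G : ℝ → Set X} (hF : IsSweep S B F)
    (hG : IsSweep S C G) (hC : MeasurableSet C) (hBC : Disjoint B C) (s : SignedMeasure X)
    {t : ℝ} (ht : t ≤ 1) : s (F t ∪ C \ G t) = s (F t) + (s C - s (G t)) := by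
  rw [VectorMeasure.of_union (hBC.mono (hF.subset ht) sdiff_subset) (hF.measurableSet t)
    (hC.diff (hG.measurableSet t)), VectorMeasure.of_sdiff (hG.measurableSet t) hC (hG.subset ht)]

theorem exists_apply_union_sdiff_eq_half {B C : Set X} {F G : ℝ → Set X} (hF : IsSweep S B F)
    (hG : IsSweep S C G) (hC : MeasurableSet C) (hBC : Disjoint B C)
    (hν : ν.toSignedMeasure ∈ S) (hh : h.DominatedBy ν) :
    ∃ t ∈ Icc (0 : ℝ) 1, h (F t ∪ C \ G t) = (h B + h C) / 2 := by
  have hcont : ContinuousOn (fun t ↦ h (F t) + (h C - h (G t))) (uIcc 0 1) := by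
    rw [uIcc_of_le zero_le_one]
    exact (hF.continuousOn_apply hν hh).add (continuousOn_const.sub (hG.continuousOn_apply hν hh))
  have hmid : (h B + h C) / 2 ∈ uIcc (h (F 0) + (h C - h (G 0))) (h (F 1) + (h C - h (G 1))) := by
    simp only [hF.zero, hG.zero, hF.one, hG.one, VectorMeasure.empty, zero_add, sub_zero,
      sub_self, add_zero]
    rcases le_total (h B) (h C) with hle | hle
    · exact mem_uIcc_of_ge (by linarith) (by linarith)
    · exact mem_uIcc_of_le (by linarith) (by linarith)
  obtain ⟨t, ht, hht⟩ := intermediate_value_uIcc hcont hmid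
  rw [uIcc_of_le zero_le_one] at ht
  exact ⟨t, ht, (hF.apply_union_sdiff hG hC hBC h ht.2).trans hht⟩

theorem CanSweep.canHalve_insert (hS : CanSweep S) (hν : ν.toSignedMeasure ∈ S)
    (hh : h.DominatedBy ν) : CanHalve (insert h S) := by
  intro A hA
  obtain ⟨D, hD⟩ := hS A hA
  have h_half : (1 / 2 : ℝ) ∈ Icc (0 : ℝ) 1 := ⟨by norm_num, by norm_num⟩
  set B := D (1 / 2)
  have hB : MeasurableSet B := hD.measurableSet _
  have hBA : B ⊆ A := hD.subset h_half.2
  have hC : MeasurableSet (A \ B) := hA.diff hB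
  have hSB : ∀ s ∈ S, s B = s A / 2 := fun s hs ↦ by rw [hD.apply_eq s hs _ h_half]; ring
  have hSC : ∀ s ∈ S, s (A \ B) = s A / 2 := fun s hs ↦ by
    rw [VectorMeasure.of_sdiff hB hA hBA, hSB s hs]; ring
  obtain ⟨F, hF⟩ := hS B hB
  obtain ⟨G, hG⟩ := hS (A \ B) hC
  obtain ⟨t, ht, hht⟩ := exists_apply_union_sdiff_eq_half hF hG hC disjoint_sdiff_right hν hh
  refine ⟨F t ∪ (A \ B) \ G t, union_subset ((hF.subset ht.2).trans hBA)
    (sdiff_subset.trans sdiff_subset), (hF.measurableSet t).union (hC.diff (hG.measurableSet t)),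
    ?_⟩
  rintro s (rfl | hs)
  · rw [hht, ← VectorMeasure.of_union disjoint_sdiff_right hB hC, union_sdiff_cancel hBA]
  · rw [hF.apply_union_sdiff hG hC disjoint_sdiff_right s ht.2, hF.apply_eq s hs t ht,
      hG.apply_eq s hs t ht, hSB s hs, hSC s hs]
    ring

end Dominated

end SignedMeasure

section Lyapunov

variable {X : Type*} [MeasurableSpace X] {ν : Measure X} [IsFiniteMeasure ν]

theorem IsNonAtomic.canHalve_singleton (hν : IsNonAtomic ν) :
    SignedMeasure.CanHalve {ν.toSignedMeasure} := by
  intro A hA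
  obtain ⟨B, hBA, hB, hνB⟩ := hν.exists_subset_measureReal_eq hA (c := ν.real A / 2)
    (by positivity) (half_le_self measureReal_nonneg)
  refine ⟨B, hBA, hB, ?_⟩
  rintro _ rfl
  rw [Measure.toSignedMeasure_apply_measurable hB, Measure.toSignedMeasure_apply_measurable hA,
    hνB]

theorem IsNonAtomic.canSweep_insert (hν : IsNonAtomic ν) {S : Set (SignedMeasure X)}
    (hS : S.Finite) (hdom : ∀ s ∈ S, s.DominatedBy ν) :
    SignedMeasure.CanSweep (insert ν.toSignedMeasure S) := by
  induction S, hS using Set.Finite.induction_on with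
  | empty => simpa using hν.canHalve_singleton.canSweep
  | @insert h S _ _ ih =>
    rw [insert_comm]
    exact ((ih fun s hs ↦ hdom s (mem_insert_of_mem h hs)).canHalve_insert (mem_insert _ _)
      (hdom h (mem_insert h S))).canSweep

end Lyapunov

namespace VectorMeasure

variable {X : Type*} [MeasurableSpace X]

theorem isNonAtomic_variation {V : Type*} [NormedAddCommGroup V] {μ : VectorMeasure X V}
    [IsFiniteMeasure μ.variation] (hμ : IsNonAtomic μ) : IsNonAtomic μ.variation := by
  intro A hA hA0
  obtain ⟨C, hCA, hC, hC0⟩ : ∃ C ⊆ A, MeasurableSet C ∧ μ C ≠ 0 := by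
    simpa [variation_apply_eq_zero hA] using hA0
  obtain ⟨B, hBC, hB, hB0, hBC'⟩ := hμ C hC hC0
  refine ⟨B, hBC.trans hCA, hB, fun h ↦ hB0 ((variation_apply_eq_zero hB).1 h B subset_rfl hB),
    fun h ↦ hBC' ?_⟩
  have hnull : μ.variation (A \ B) = 0 := by
    rw [measure_sdiff (hBC.trans hCA) hB.nullMeasurableSet (measure_ne_top _ _), h, tsub_self]
  have := (variation_apply_eq_zero (hA.diff hB)).1 hnull (C \ B) (sdiff_subset_sdiff_left hCA)
    (hC.diff hB)
  rwa [of_sdiff hB hC hBC, sub_eq_zero, eq_comm] at this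

variable {ι : Type*}

noncomputable def component (μ : VectorMeasure X (EuclideanSpace ℝ ι)) (i : ι) :
    SignedMeasure X :=
  μ.mapRange (EuclideanSpace.proj (𝕜 := ℝ) i).toLinearMap.toAddMonoidHom
    (EuclideanSpace.proj i).continuous

@[simp]
theorem component_apply (μ : VectorMeasure X (EuclideanSpace ℝ ι)) (i : ι) (E : Set X) :
    μ.component i E = μ E i :=
  rfl

variable [Fintype ι]

theorem _root_.EuclideanSpace.enorm_le_sum_enorm (x : EuclideanSpace ℝ ι) :
    ‖x‖ₑ ≤ ∑ i, ‖x i‖ₑ := by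
  have : ‖x‖ ≤ ∑ i, ‖x i‖ := by
    rw [EuclideanSpace.norm_eq]
    exact Real.sqrt_le_iff.2
      ⟨by positivity, Finset.sum_sq_le_sq_sum_of_nonneg fun i _ ↦ norm_nonneg _⟩
  simpa only [enorm_eq_nnnorm, ← ENNReal.ofNNReal_finsetSum, ENNReal.coe_le_coe,
    ← NNReal.coe_le_coe, NNReal.coe_sum, coe_nnnorm]

instance (μ : VectorMeasure X (EuclideanSpace ℝ ι)) : IsFiniteMeasure μ.variation := by
  have (i : ι) : IsFiniteMeasure (μ.component i).variation := by
    rw [← SignedMeasure.totalVariation_eq_variation]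
    infer_instance
  refine isFiniteMeasure_of_le (∑ i, (μ.component i).variation)
    (variation_le_of_forall_enorm_le fun E _ ↦ ?_)
  rw [Measure.coe_finsetSum, Finset.sum_apply]
  exact (EuclideanSpace.enorm_le_sum_enorm _).trans
    (Finset.sum_le_sum fun i _ ↦ enorm_measure_le_variation (μ.component i) E)

theorem component_dominatedBy (μ : VectorMeasure X (EuclideanSpace ℝ ι)) (i : ι) :
    (μ.component i).DominatedBy μ.variation := fun E ↦
  (PiLp.norm_apply_le (μ E) i).trans norm_measure_le_variation

theorem exists_subset_apply_eq_smul {μ : VectorMeasure X (EuclideanSpace ℝ ι)}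
    (hμ : IsNonAtomic μ) {A : Set X} (hA : MeasurableSet A) {t : ℝ} (ht : t ∈ Icc (0 : ℝ) 1) :
    ∃ B ⊆ A, MeasurableSet B ∧ μ B = t • μ A := by
  obtain ⟨D, hD⟩ := (isNonAtomic_variation hμ).canSweep_insert (finite_range μ.component)
    (forall_mem_range.2 μ.component_dominatedBy) A hA
  refine ⟨D t, hD.subset ht.2, hD.measurableSet t, ?_⟩
  ext i
  simpa using hD.apply_eq _ (mem_insert_of_mem _ (mem_range_self i)) t ht

end VectorMeasure

end MeasureTheory

/-- Lyapunov convexity instance: for a non-atomic finite-dimensional vector measure `μ`,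
for every `β ∈ [0,1]` there is a measurable set `V_β` with `μ(V_β) = β·μ(univ)`,
and its complement satisfies `μ(V_βᶜ) = (1−β)·μ(univ)`. -/
theorem lyapunov_fraction_set {X : Type*} [MeasurableSpace X] {d : ℕ}
    (μ : VectorMeasure X (EuclideanSpace ℝ (Fin d)))
    (hna : ∀ A : Set X, MeasurableSet A → μ A ≠ 0 →
      ∃ B ⊆ A, MeasurableSet B ∧ μ B ≠ 0 ∧ μ B ≠ μ A) :
    ∀ β : ℝ, β ∈ Set.Icc (0 : ℝ) 1 →
      ∃ V : Set X, MeasurableSet V ∧ μ V = β • μ Set.univ ∧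
        μ Vᶜ = (1 - β) • μ Set.univ := by
  intro β hβ
  obtain ⟨V, -, hV, hμV⟩ := VectorMeasure.exists_subset_apply_eq_smul hna MeasurableSet.univ hβ
  refine ⟨V, hV, hμV, ?_⟩
  rw [VectorMeasure.of_compl hV, hμV, sub_smul, one_smul]
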